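/- arXiv:2112.02907 — 3 statements merged into one kernel-verified Lean document; each statement's English description precedes it below -/
import Mathlib

section
/- Let k be a field and L a finite separable field extension of k. Then the kernel of the multiplication map μ : L ⊗_k L → L, defined by μ(x ⊗ y) = xy, is generated as an ideal by a single idempotent element of L ⊗_k L. -/
open TensorProduct

/-- The diagonal ideal is finitely generated, and it is idempotent because its cotangent space
`Ω[S⁄R]` vanishes; a finitely generated idempotent ideal is generated by an idempotent. -/
theorem Algebra.FormallyUnramified.exists_isIdempotentElem_ker_lmul'_eq_span
    (R S : Type*) [CommRing R] [CommRing S] [Algebra R S]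
    [Algebra.FormallyUnramified R S] [Algebra.EssFiniteType R S] :
    ∃ e : S ⊗[R] S, IsIdempotentElem e ∧
      RingHom.ker (Algebra.TensorProduct.lmul' R (S := S)) = Ideal.span {e} := by
  have hidem : IsIdempotentElem (KaehlerDifferential.ideal R S) :=
    (Ideal.cotangent_subsingleton_iff _).mp (inferInstanceAs (Subsingleton Ω[S⁄R]))
  exact (Ideal.isIdempotentElem_iff_of_fg _ (KaehlerDifferential.ideal_fg R S)).mp hidem

/-- For a finite separable field extension `L/k`, the kernel of the multiplication map
`L ⊗[k] L → L` is generated by a single idempotent element. -/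
theorem ker_lmul'_eq_span_idempotent_of_finite_separable
    {k L : Type*} [Field k] [Field L] [Algebra k L]
    [FiniteDimensional k L] [Algebra.IsSeparable k L] :
    ∃ e : L ⊗[k] L, IsIdempotentElem e ∧
      RingHom.ker (Algebra.TensorProduct.lmul' k (S := L)) = Ideal.span {e} := by
  have : Algebra.FormallyUnramified k L := .of_isSeparable k L
  exact Algebra.FormallyUnramified.exists_isIdempotentElem_ker_lmul'_eq_span k L
end

section
/- Let k be a field and A a nonzero commutative k-algebra. If the multiplication map μ : A ⊗_k A → A, defined by μ(x ⊗ y) = xy, is injective, then the structure homomorphism k → A is surjective; that is, A = k·1. -/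
open TensorProduct

/-- If `A` is a nonzero commutative `k`-algebra such that the multiplication map
`A ⊗[k] A → A` is injective, then the structure map `k → A` is surjective. -/
theorem surjective_algebraMap_of_injective_lmul'
    {k A : Type*} [Field k] [CommRing A] [Algebra k A] [Nontrivial A]
    (h : Function.Injective (Algebra.TensorProduct.lmul' k (S := A))) :
    Function.Surjective (algebraMap k A) := by
  -- construct a linear functional `f : A →ₗ[k] k` with `f 1 = 1`
  have h1 : (1 : A) ≠ 0 := one_ne_zero
  obtain ⟨f, hf⟩ := LinearMap.exists_extend
    ((LinearEquiv.toSpanNonzeroSingleton k A 1 h1).symm :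
      (Submodule.span k {(1 : A)}) →ₗ[k] k)
  have hf1 : f 1 = 1 := by
    have := LinearMap.congr_fun hf
      ⟨1, Submodule.mem_span_singleton_self (1 : A)⟩
    simpa using this.trans
      (by simpa using (LinearEquiv.toSpanNonzeroSingleton k A 1 h1).symm_apply_apply 1)
  intro a
  -- `a ⊗ 1 = 1 ⊗ a`
  have key : a ⊗ₜ[k] (1 : A) = (1 : A) ⊗ₜ[k] a := by
    apply h
    simp [Algebra.TensorProduct.lmul'_apply_tmul, mul_comm]
  -- apply `f ⊗ id`
  have := congrArg (fun x => (TensorProduct.lid k A) (LinearMap.rTensor A f x)) key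
  simp only [LinearMap.rTensor_tmul, TensorProduct.lid_tmul, hf1, one_smul] at this
  refine ⟨f a, ?_⟩
  rw [Algebra.algebraMap_eq_smul_one, this]
end

section
/- Let f : (A, m) → (B, n) be a local homomorphism of commutative local rings such that B is finitely generated as an A-module and n = m·B. Denote by κ_A = A/m and κ_B = B/n the residue fields, and suppose κ_B = κ_A(ū) is generated over κ_A by the class ū of an element u ∈ B; let d = [κ_B : κ_A]. Then B is generated as an A-module by 1, u, …, u^{d−1}, and there exists a monic polynomial P ∈ A[T] of degree d with P(u) = 0 in B whose image in κ_A[T] is the minimal polynomial of ū over κ_A. -/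
/-!
Reducing mod `n = m·B`, Nakayama's lemma lifts generators of `κ_B` over `κ_A` to generators of
`B` over `A`; since `ū` generates `κ_B`, its powers `ū^i`, `i < d`, form a basis, so the `u^i`
generate `B`. Writing `u^d` in terms of them gives a monic `P` of degree `d` with `P(u) = 0`;
its reduction is monic of degree `d` and kills `ū`, hence is the minimal polynomial.
-/

open IsLocalRing Polynomial

theorem IsLocalRing.span_eq_top_of_span_residue_eq_top
    {A B ι : Type*} [CommRing A] [CommRing B] [IsLocalRing A] [IsLocalRing B]
    [Algebra A B] [IsLocalHom (algebraMap A B)] [Module.Finite A B]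
    (hn : maximalIdeal B = (maximalIdeal A).map (algebraMap A B)) {s : ι → B}
    (hs : Submodule.span (ResidueField A) (Set.range (residue B ∘ s)) = ⊤) :
    Submodule.span A (Set.range s) = ⊤ := by
  let π : B →ₗ[A] ResidueField B := (IsScalarTower.toAlgHom A B (ResidueField B)).toLinearMap
  have hπ : (Submodule.span A (Set.range s)).map π = ⊤ := by
    rw [Submodule.map_span, ← Set.range_comp,
      ← Submodule.restrictScalars_span A (ResidueField A) residue_surjective]
    exact (Submodule.restrictScalars_eq_top_iff _ _ _).mpr hs
  have hker : LinearMap.ker π = maximalIdeal A • ⊤ := by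
    rw [Ideal.smul_top_eq_map, ← hn]
    ext b
    exact Ideal.Quotient.eq_zero_iff_mem
  refine top_le_iff.mp (Submodule.le_of_le_smul_of_le_jacobson_bot Module.Finite.fg_top
    (maximalIdeal_le_jacobson ⊥) ?_)
  rw [← hker, ← Submodule.comap_map_eq, hπ, Submodule.comap_top]

theorem exists_monic_natDegree_eq_aeval_eq_zero_of_pow_mem_span
    {A B : Type*} [CommRing A] [Nontrivial A] [CommRing B] [Algebra A B] {x : B} {n : ℕ}
    (hx : x ^ n ∈ Submodule.span A (Set.range fun i : Fin n => x ^ (i : ℕ))) :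
    ∃ P : A[X], P.Monic ∧ P.natDegree = n ∧ aeval x P = 0 := by
  obtain ⟨c, hc⟩ := (Submodule.mem_span_range_iff_exists_fun A).mp hx
  have hlt : (∑ i : Fin n, C (c i) * X ^ (i : ℕ)).degree < (n : WithBot ℕ) := degree_sum_fin_lt c
  refine ⟨X ^ n - ∑ i : Fin n, C (c i) * X ^ (i : ℕ), monic_X_pow_sub hlt, ?_, ?_⟩
  · exact natDegree_eq_of_degree_eq_some
      (by rw [degree_sub_eq_left_of_degree_lt (by rwa [degree_X_pow]), degree_X_pow])
  · simp [← hc, Algebra.smul_def]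

theorem minpoly.eq_of_monic_of_natDegree_eq {K L : Type*} [Field K] [Ring L] [Algebra K L]
    {x : L} (hx : IsIntegral K x) {P : K[X]} (hP : P.Monic) (hPx : Polynomial.aeval x P = 0)
    (hdeg : P.natDegree = (minpoly K x).natDegree) : P = minpoly K x := by
  refine minpoly.unique_of_degree_le_degree_minpoly K x hP hPx ?_
  rw [degree_eq_natDegree hP.ne_zero, degree_eq_natDegree (minpoly.ne_zero hx), hdeg]

/-- Let `f : (A,m) → (B,n)` be a local homomorphism of commutative local rings with `B` a
finitely generated `A`-module and `n = m·B`. If the residue field `κ_B` is generated over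
`κ_A` by the class `ū` of some `u ∈ B`, and `d = [κ_B : κ_A]`, then `B` is generated as an
`A`-module by `1, u, …, u^(d-1)` and there is a monic `P ∈ A[T]` of degree `d` with
`P(u) = 0` whose image in `κ_A[T]` is the minimal polynomial of `ū`. -/
theorem generated_by_powers_and_monic_lift_of_primitive_element
    {A B : Type*} [CommRing A] [CommRing B] [IsLocalRing A] [IsLocalRing B]
    [Algebra A B] (hloc : IsLocalHom (algebraMap A B)) [Module.Finite A B]
    (hn : maximalIdeal B = Ideal.map (algebraMap A B) (maximalIdeal A))
    [Algebra (ResidueField A) (ResidueField B)]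
    (hcomp : algebraMap (ResidueField A) (ResidueField B) =
      ResidueField.map (algebraMap A B))
    (u : B)
    (hgen : Algebra.adjoin (ResidueField A) {IsLocalRing.residue B u} = ⊤)
    (d : ℕ) (hd : d = Module.finrank (ResidueField A) (ResidueField B)) :
    Submodule.span A (Set.range fun i : Fin d => u ^ (i : ℕ)) = ⊤ ∧
    ∃ P : Polynomial A, P.Monic ∧ P.natDegree = d ∧ Polynomial.aeval u P = 0 ∧
      P.map (IsLocalRing.residue A) =
        minpoly (ResidueField A) (IsLocalRing.residue B u) := by
  -- `hcomp` identifies the given algebra structure with Mathlib's, whose instances we then use.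
  obtain rfl := Algebra.algebra_ext ‹_› ResidueField.instAlgebra (DFunLike.congr_fun hcomp)
  have hint : IsIntegral (ResidueField A) (residue B u) := .of_finite _ _
  let pb := PowerBasis.ofAdjoinEqTop hint hgen
  obtain rfl : d = pb.dim := hd.trans pb.finrank
  have hspan : Submodule.span A (Set.range fun i : Fin pb.dim => u ^ (i : ℕ)) = ⊤ := by
    refine span_eq_top_of_span_residue_eq_top hn ?_
    simpa only [pb, PowerBasis.coe_basis, PowerBasis.ofAdjoinEqTop_gen, Function.comp_def,
      map_pow] using pb.basis.span_eq
  obtain ⟨P, hP, hdeg, hPu⟩ := exists_monic_natDegree_eq_aeval_eq_zero_of_pow_mem_span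
    (hspan ▸ Submodule.mem_top : u ^ pb.dim ∈ _)
  have hPu_residue : aeval (residue B u) (P.map (residue A)) = 0 := by
    rw [← ResidueField.algebraMap_eq (R := A), aeval_map_algebraMap,
      ← ResidueField.algebraMap_eq (R := B), aeval_algebraMap_apply, hPu, map_zero]
  refine ⟨hspan, P, hP, hdeg, hPu, minpoly.eq_of_monic_of_natDegree_eq hint (hP.map _)
    hPu_residue ?_⟩
  rw [hP.natDegree_map, hdeg, PowerBasis.ofAdjoinEqTop_dim]
end
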